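/- arXiv:2002.04508 — 8 statements merged into one kernel-verified Lean document; each statement's English description precedes it below -/
import Mathlib

section
/- Let β ∈ (0,1), q ∈ (0,1], δ := β·q, Q_b > 0, μ_s > 0, S := 1 + 1/δ + δ·Q_b/μ_s and λ* := (S − √(S² − 4/δ))/2. Then 0 < λ* < 1, and λ* is the unique root of the polynomial λ² − S·λ + 1/δ lying in the open interval (0,1). -/
set_option maxHeartbeats 1000000

/-- With Q_b > 0, the stable root λ* := (S − √(S² − 4/δ))/2 satisfies
0 < λ* < 1, and it is the unique root of λ² − S·λ + 1/δ in the open interval (0,1). -/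
theorem stable_root_in_unit_interval_unique
    (β q Qb μs δ S lamStar : ℝ)
    (hβ0 : 0 < β) (hβ1 : β < 1) (hq0 : 0 < q) (hq1 : q ≤ 1)
    (hδ : δ = β * q) (hQb : 0 < Qb) (hμs : 0 < μs)
    (hS : S = 1 + 1/δ + δ * Qb / μs)
    (hlamStar : lamStar = (S - Real.sqrt (S ^ 2 - 4 / δ)) / 2) :
    (0 < lamStar ∧ lamStar < 1) ∧
    lamStar ^ 2 - S * lamStar + 1 / δ = 0 ∧
    ∀ x : ℝ, x ^ 2 - S * x + 1 / δ = 0 → 0 < x → x < 1 → x = lamStar := by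
  have hδ0 : 0 < δ := by rw [hδ]; positivity
  have hδ1 : δ < 1 := by nlinarith
  have hinv : 1 < 1/δ := by rw [lt_div_iff₀ hδ0]; linarith
  have hSgt : 1 + 1/δ < S := by
    have h : 0 < δ * Qb / μs := by positivity
    linarith [hS.ge, hS.le]
  have hS2 : 2 < S := by linarith
  have h4 : 0 < 4 / δ := by positivity
  have h44 : 4 / δ = 4 * (1/δ) := by ring
  have hD0 : 0 < S ^ 2 - 4 / δ := by
    rw [h44]
    nlinarith [mul_pos (sub_pos.2 hSgt) (by linarith : (0:ℝ) < S + (1 + 1/δ)),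
      sq_nonneg (1 - 1/δ)]
  set D := S ^ 2 - 4 / δ with hDdef
  have hsq : Real.sqrt D ^ 2 = D := Real.sq_sqrt hD0.le
  have hsq' : Real.sqrt D ^ 2 = S ^ 2 - 4 / δ := hsq.trans hDdef
  have hsqnn : 0 ≤ Real.sqrt D := Real.sqrt_nonneg D
  have hsqltS : Real.sqrt D < S := by
    nlinarith [hsq', hsqnn, h4, hS2]
  have hDgt : (S - 2) ^ 2 < D := by
    rw [hDdef, h44]; nlinarith [hSgt]
  have hsqgt : S - 2 < Real.sqrt D := by
    nlinarith [hsq, hsqnn, hDgt, hS2]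
  have hpos : 0 < lamStar := by rw [hlamStar]; linarith
  have hlt1 : lamStar < 1 := by rw [hlamStar]; linarith
  have hroot : lamStar ^ 2 - S * lamStar + 1 / δ = 0 := by
    rw [hlamStar]; linear_combination hsq' / 4
  refine ⟨⟨hpos, hlt1⟩, hroot, ?_⟩
  intro x hx hx0 hx1
  have hother : 1 < S - lamStar := by
    rw [hlamStar]; nlinarith [hsqnn, hS2]
  have hfac : (x - lamStar) * (x - (S - lamStar)) = 0 := by
    linear_combination hx - hroot
  rcases mul_eq_zero.1 hfac with h | h
  · linarith
  · linarith
end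

section
/- Let β ∈ (0,1), q ∈ (0,1], δ := β·q, Q_b > 0, μ_s > 0, S := 1 + 1/δ + δ·Q_b/μ_s and λ₂ := (S + √(S² − 4/δ))/2. Then λ₂ > 1/δ > 1; in particular the unstable root of the Hamiltonian characteristic polynomial lies strictly outside the unit circle, so the Hamiltonian system is saddle-path stable (exactly one root inside and one root outside the unit circle). -/
/-- The unstable root λ₂ := (S + √(S² − 4/δ))/2 satisfies λ₂ > 1/δ > 1;
in particular the Hamiltonian system is saddle-path stable: the stable root λ* has
modulus strictly less than 1 and the unstable root λ₂ has modulus strictly greater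
than 1. -/
theorem unstable_root_outside_unit_circle_saddle_path
    (β q Qb μs δ S lamStar lam2 : ℝ)
    (hβ0 : 0 < β) (hβ1 : β < 1) (hq0 : 0 < q) (hq1 : q ≤ 1)
    (hδ : δ = β * q) (hQb : 0 < Qb) (hμs : 0 < μs)
    (hS : S = 1 + 1/δ + δ * Qb / μs)
    (hlamStar : lamStar = (S - Real.sqrt (S ^ 2 - 4 / δ)) / 2)
    (hlam2 : lam2 = (S + Real.sqrt (S ^ 2 - 4 / δ)) / 2) :
    lam2 > 1 / δ ∧ 1 / δ > 1 ∧ |lamStar| < 1 ∧ |lam2| > 1 := by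
  have hδ0 : 0 < δ := by rw [hδ]; positivity
  have hδ1 : δ < 1 := by
    have : β * q ≤ β := mul_le_of_le_one_right hβ0.le hq1
    linarith [hδ ▸ this]
  have he0 : 0 < 1/δ := by positivity
  have he1 : 1 < 1/δ := one_lt_one_div hδ0 hδ1
  have he : δ * (1/δ) = 1 := mul_one_div_cancel hδ0.ne'
  have ha : 0 < δ * Qb / μs := by positivity
  set a := δ * Qb / μs with hadef
  set e := 1/δ with hedef
  -- key quadratic facts
  have hkey2 : (2*e - S)^2 < S^2 - 4*e := by
    rw [hS]; nlinarith [ha, he0, mul_pos he0 ha]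
  have hkey1 : (S - 2)^2 < S^2 - 4*e := by
    rw [hS]; nlinarith [ha, he0]
  have hD0 : (0:ℝ) ≤ S^2 - 4/δ := by
    have : (2*e - S)^2 ≥ 0 := sq_nonneg _
    have h4 : 4/δ = 4*e := by rw [hedef]; ring
    linarith [hkey2]
  have h4 : 4/δ = 4*e := by rw [hedef]; ring
  have hsq0 : 0 ≤ Real.sqrt (S^2 - 4/δ) := Real.sqrt_nonneg _
  have hS0 : 0 < S := by rw [hS]; positivity
  -- sqrt D < S
  have hsqS : Real.sqrt (S^2 - 4/δ) < S := by
    rw [show Real.sqrt (S^2 - 4/δ) < S ↔ S^2 - 4/δ < S^2 from Real.sqrt_lt' hS0]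
    have : 0 < 4/δ := by positivity
    linarith
  -- sqrt D > 2e - S
  have hgt2 : 2*e - S < Real.sqrt (S^2 - 4/δ) := by
    rcases le_or_gt (2*e - S) 0 with h | h
    · rcases eq_or_lt_of_le h with h' | h'
      · rw [h']
        have : Real.sqrt (S^2 - 4/δ) ≠ 0 := by
          intro hz
          have := Real.sqrt_eq_zero hD0 |>.mp hz
          rw [h4] at this
          nlinarith [hkey2, sq_nonneg (2*e - S)]
        exact lt_of_le_of_ne hsq0 (Ne.symm this)
      · exact lt_of_lt_of_le h' hsq0
    · have := Real.lt_sqrt (y := S^2 - 4/δ) h.le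
      rw [this, h4]; exact hkey2
  -- sqrt D > S - 2
  have hgt1 : S - 2 < Real.sqrt (S^2 - 4/δ) := by
    rcases le_or_gt (S - 2) 0 with h | h
    · calc S - 2 ≤ 0 := h
        _ < Real.sqrt (S^2 - 4/δ) := by
          rcases eq_or_lt_of_le hsq0 with h' | h'
          · exfalso
            have := Real.sqrt_eq_zero hD0 |>.mp h'.symm
            rw [h4] at this
            nlinarith [hkey2, sq_nonneg (2*e - S)]
          · exact h'
    · have := Real.lt_sqrt (y := S^2 - 4/δ) h.le
      rw [this, h4]; exact hkey1
  have hlam2gt : lam2 > 1/δ := by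
    rw [hlam2, ← hedef]; linarith
  refine ⟨hlam2gt, he1, ?_, ?_⟩
  · have hstar0 : 0 ≤ lamStar := by rw [hlamStar]; linarith
    have hstar1 : lamStar < 1 := by rw [hlamStar]; linarith
    rw [abs_of_nonneg hstar0]; exact hstar1
  · have : (1:ℝ) < lam2 := lt_trans he1 hlam2gt
    rw [abs_of_pos (by linarith)]; exact this
end

section
/- Let β ∈ (0,1), q ∈ (0,1], δ := β·q, and Q_b > 0. For μ_s > 0 define S(μ_s) := 1 + 1/δ + δ·Q_b/μ_s and λ*(μ_s) := (S(μ_s) − √(S(μ_s)² − 4/δ))/2. Then the map μ_s ↦ λ*(μ_s) is strictly increasing on (0, ∞): the optimal public-debt persistence increases with the cost of changing the fiscal policy instrument. -/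
lemma lambda_antitone (c : ℝ) (hc : 0 < c) {S₁ S₂ : ℝ}
    (h1 : c ≤ S₁ ^ 2) (h01 : 0 < S₁) (h12 : S₁ < S₂) :
    (S₂ - Real.sqrt (S₂ ^ 2 - c)) / 2 < (S₁ - Real.sqrt (S₁ ^ 2 - c)) / 2 := by
  set r₁ := Real.sqrt (S₁ ^ 2 - c) with hr₁
  set r₂ := Real.sqrt (S₂ ^ 2 - c) with hr₂
  have hn1 : 0 ≤ S₁ ^ 2 - c := by linarith
  have hn2 : 0 ≤ S₂ ^ 2 - c := by nlinarith
  have hr1sq : r₁ ^ 2 = S₁ ^ 2 - c := Real.sq_sqrt hn1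
  have hr2sq : r₂ ^ 2 = S₂ ^ 2 - c := Real.sq_sqrt hn2
  have hr1nn : 0 ≤ r₁ := Real.sqrt_nonneg _
  have hr2nn : 0 ≤ r₂ := Real.sqrt_nonneg _
  have hr12 : r₁ ≤ r₂ := Real.sqrt_le_sqrt (by nlinarith)
  have hd1 : 0 < S₁ + r₁ := by linarith
  have hd2 : 0 < S₂ + r₂ := by linarith
  have e1 : S₁ - r₁ = c / (S₁ + r₁) := by
    field_simp
    nlinarith
  have e2 : S₂ - r₂ = c / (S₂ + r₂) := by
    field_simp
    nlinarith
  rw [e1, e2]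
  have : c / (S₂ + r₂) < c / (S₁ + r₁) :=
    div_lt_div_of_pos_left hc hd1 (by linarith)
  linarith

/-- The optimal public-debt persistence
λ*(μ_s) := (S(μ_s) − √(S(μ_s)² − 4/δ))/2 with S(μ_s) := 1 + 1/δ + δ·Q_b/μ_s is
strictly increasing in the tax-smoothing cost μ_s on (0, ∞). -/
theorem debt_persistence_strictMonoOn_smoothing_cost
    (β q Qb δ : ℝ)
    (hβ0 : 0 < β) (hβ1 : β < 1) (hq0 : 0 < q) (hq1 : q ≤ 1)
    (hδ : δ = β * q) (hQb : 0 < Qb) :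
    StrictMonoOn
      (fun μs : ℝ =>
        ((1 + 1/δ + δ * Qb / μs) -
          Real.sqrt ((1 + 1/δ + δ * Qb / μs) ^ 2 - 4 / δ)) / 2)
      (Set.Ioi 0) := by
  have hδ0 : 0 < δ := by rw [hδ]; positivity
  have hδ1 : δ < 1 := by nlinarith
  intro a ha b hb hab
  simp only [Set.mem_Ioi] at ha hb
  set Sa := 1 + 1/δ + δ * Qb / a with hSa
  set Sb := 1 + 1/δ + δ * Qb / b with hSb
  have hδinv : 1 < 1/δ := by rw [lt_div_iff₀ hδ0]; linarith
  have hpos : 0 < δ * Qb := by positivity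
  have hab' : δ * Qb / b < δ * Qb / a := by
    apply div_lt_div_of_pos_left hpos ha hab
  have hSbpos : 0 < Sb := by
    have : 0 < δ * Qb / b := by positivity
    simp only [hSb]; linarith
  have hSba : Sb < Sa := by simp only [hSa, hSb]; linarith
  have hkey : 4 / δ ≤ Sb ^ 2 := by
    have h1 : 1 + 1/δ < Sb := by
      have : 0 < δ * Qb / b := by positivity
      simp only [hSb]; linarith
    have h2 : (1 + 1/δ) ^ 2 - 4 / δ = (1 - 1/δ) ^ 2 := by
      field_simp; ring
    nlinarith [sq_nonneg (1 - 1/δ)]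
  exact lambda_antitone (4/δ) (by positivity) hkey hSbpos hSba
end

section
/- Let β ∈ (0,1), q ∈ (0,1], δ := β·q, and Q_b > 0. For μ_s > 0 define S(μ_s) := 1 + 1/δ + δ·Q_b/μ_s and λ*(μ_s) := (S(μ_s) − √(S(μ_s)² − 4/δ))/2. Then λ*(μ_s) tends to 0 as μ_s tends to 0 from the right. -/
open Filter Topology

/-- Eventually `S - √(S² - c) = c / (S + √(S² - c))`, whose denominator
grows without bound. -/
theorem tendsto_sub_sqrt_sq_sub_atTop (c : ℝ) :
    Tendsto (fun S : ℝ => S - Real.sqrt (S ^ 2 - c)) atTop (𝓝 0) := by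
  have hden : Tendsto (fun S : ℝ => S + Real.sqrt (S ^ 2 - c)) atTop atTop :=
    tendsto_atTop_mono (fun S => le_add_of_nonneg_right (Real.sqrt_nonneg _)) tendsto_id
  refine ((tendsto_const_nhds (x := c)).div_atTop hden).congr' ?_
  filter_upwards [eventually_ge_atTop (max 1 (|c| + 1))] with S hS
  have hS1 : 1 ≤ S := le_of_max_le_left hS
  have hSc : c ≤ S ^ 2 := by nlinarith [le_of_max_le_right hS, le_abs_self c]
  have hpos : 0 < S + Real.sqrt (S ^ 2 - c) := by positivity
  rw [div_eq_iff hpos.ne', mul_comm, ← sq_sub_sq, Real.sq_sqrt (sub_nonneg.2 hSc)]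
  ring

theorem tendsto_const_add_div_nhdsGT_zero_atTop (a : ℝ) {b : ℝ} (hb : 0 < b) :
    Tendsto (fun x : ℝ => a + b / x) (𝓝[>] 0) atTop := by
  simp only [div_eq_mul_inv]
  exact tendsto_atTop_add_const_left _ a (tendsto_inv_nhdsGT_zero.const_mul_atTop hb)

theorem debt_persistence_tendsto_zero_general
    (β q Qb δ : ℝ)
    (hβ0 : 0 < β) (hq0 : 0 < q)
    (hδ : δ = β * q) (hQb : 0 < Qb) :
    Filter.Tendsto
      (fun μs : ℝ =>
        ((1 + 1/δ + δ * Qb / μs) -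
          Real.sqrt ((1 + 1/δ + δ * Qb / μs) ^ 2 - 4 / δ)) / 2)
      (nhdsWithin 0 (Set.Ioi 0)) (nhds 0) := by
  have hδ0 : 0 < δ := hδ ▸ mul_pos hβ0 hq0
  have hS := tendsto_const_add_div_nhdsGT_zero_atTop (1 + 1/δ) (mul_pos hδ0 hQb)
  simpa using ((tendsto_sub_sqrt_sq_sub_atTop (4 / δ)).comp hS).div_const 2

/-- λ*(μ_s) → 0 as μ_s → 0⁺. -/
theorem debt_persistence_tendsto_zero
    (β q Qb δ : ℝ)
    (hβ0 : 0 < β) (hβ1 : β < 1) (hq0 : 0 < q) (hq1 : q ≤ 1)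
    (hδ : δ = β * q) (hQb : 0 < Qb) :
    Filter.Tendsto
      (fun μs : ℝ =>
        ((1 + 1/δ + δ * Qb / μs) -
          Real.sqrt ((1 + 1/δ + δ * Qb / μs) ^ 2 - 4 / δ)) / 2)
      (nhdsWithin 0 (Set.Ioi 0)) (nhds 0) :=
  debt_persistence_tendsto_zero_general β q Qb δ hβ0 hq0 hδ hQb
end

section
/- Let β ∈ (0,1), q ∈ (0,1], δ := β·q, Q_b > 0, μ_s > 0, S := 1 + 1/δ + δ·Q_b/μ_s and λ* := (S − √(S² − 4/δ))/2. Then the optimal fiscal rule feedback parameter G_b* := 1/δ − λ* satisfies 1/δ − 1 < G_b* < 1/δ. -/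
/-- The optimal fiscal rule feedback parameter G_b* := 1/δ − λ*
satisfies 1/δ − 1 < G_b* < 1/δ. -/
theorem optimal_fiscal_rule_parameter_bounds
    (β q Qb μs δ S lamStar GbStar : ℝ)
    (hβ0 : 0 < β) (hβ1 : β < 1) (hq0 : 0 < q) (hq1 : q ≤ 1)
    (hδ : δ = β * q) (hQb : 0 < Qb) (hμs : 0 < μs)
    (hS : S = 1 + 1/δ + δ * Qb / μs)
    (hlamStar : lamStar = (S - Real.sqrt (S ^ 2 - 4 / δ)) / 2)
    (hGb : GbStar = 1 / δ - lamStar) :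
    1 / δ - 1 < GbStar ∧ GbStar < 1 / δ := by
  have hδ0 : 0 < δ := by rw [hδ]; positivity
  have hδ1 : δ < 1 := by
    calc δ = β * q := hδ
    _ ≤ β * 1 := by nlinarith
    _ < 1 := by linarith
  have hinv : 1 < 1 / δ := by
    rw [lt_div_iff₀ hδ0]; linarith
  have hSgt : 1 + 1/δ < S := by
    rw [hS]; have : 0 < δ * Qb / μs := by positivity
    linarith
  have hS2 : 2 < S := by linarith
  have hSd : δ + 1 < δ * S := by
    have := mul_lt_mul_of_pos_left hSgt hδ0
    have h1 : δ * (1 + 1/δ) = δ + 1 := by field_simp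
    linarith [h1 ▸ this]
  have hdd : (4 / δ) * δ = 4 := by field_simp
  have key : (S - 2) ^ 2 < S ^ 2 - 4 / δ := by nlinarith [div_pos (by norm_num : (0:ℝ)<4) hδ0]
  have hD0 : 0 ≤ S ^ 2 - 4 / δ := by nlinarith
  have hsq1 : S - 2 < Real.sqrt (S ^ 2 - 4 / δ) := by
    nlinarith [Real.sq_sqrt hD0, Real.sqrt_nonneg (S ^ 2 - 4 / δ),
      sq_nonneg (Real.sqrt (S ^ 2 - 4 / δ) - (S - 2))]
  have hsq2 : Real.sqrt (S ^ 2 - 4 / δ) < S := by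
    have h4 : 0 < 4 / δ := by positivity
    nlinarith [Real.sq_sqrt hD0, Real.sqrt_nonneg (S ^ 2 - 4 / δ)]
  constructor <;> (rw [hGb, hlamStar]; linarith)
end

section
/- Let β ∈ (0,1), q ∈ (0,1], δ := β·q, Q_b > 0, μ_s > 0, S := 1 + 1/δ + δ·Q_b/μ_s and λ* := (S − √(S² − 4/δ))/2. Then P_b := Q_b/(1 − λ*) is well defined and strictly positive, and it satisfies the scalar discrete algebraic Riccati equation P_b = Q_b + P_b/δ − P_b²/(μ_s + δ·P_b). -/
/-!
The stable root satisfies `λ* < 1`, hence `P_b = Q_b / (1 - λ*) > 0`: the characteristic polynomial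
`p` is monic and `p 1 = -δ Q_b / μ_s < 0`, so its smaller root is below `1`. Substituting
`Q_b = P_b (1 - λ*)` into the Riccati equation and clearing denominators leaves a multiple of
`p(λ*) = 0`.
-/

section SmallerRoot

variable {S r a : ℝ}

theorem sq_sub_two_mul_lt_discrim_of_eval_neg (h : a ^ 2 - S * a + r < 0) :
    (S - 2 * a) ^ 2 < S ^ 2 - 4 * r := by
  linarith

theorem smaller_root_lt_of_eval_neg (h : a ^ 2 - S * a + r < 0) :
    (S - √(S ^ 2 - 4 * r)) / 2 < a := by
  have hlt : |S - 2 * a| < √(S ^ 2 - 4 * r) := by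
    rw [← Real.sqrt_sq_eq_abs]
    exact Real.sqrt_lt_sqrt (sq_nonneg _) (sq_sub_two_mul_lt_discrim_of_eval_neg h)
  linarith [le_abs_self (S - 2 * a)]

theorem smaller_root_isRoot (hD : 0 ≤ S ^ 2 - 4 * r) :
    ((S - √(S ^ 2 - 4 * r)) / 2) ^ 2 - S * ((S - √(S ^ 2 - 4 * r)) / 2) + r = 0 := by
  linear_combination Real.sq_sqrt hD / 4

end SmallerRoot

theorem riccati_of_hamiltonian_root {δ Q μ x : ℝ} (hδ : 0 < δ) (hQ : 0 < Q) (hμ : 0 < μ)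
    (hx : x < 1) (hroot : x ^ 2 - (1 + 1 / δ + δ * Q / μ) * x + 1 / δ = 0) :
    Q / (1 - x) = Q + Q / (1 - x) / δ - (Q / (1 - x)) ^ 2 / (μ + δ * (Q / (1 - x))) := by
  have h1x : 0 < 1 - x := sub_pos.2 hx
  have hden : 0 < μ + δ * (Q / (1 - x)) := by positivity
  field_simp at hroot ⊢
  linear_combination -hroot

theorem riccati_solution_value_function_coefficient_general
    (β q Qb μs δ S lamStar Pb : ℝ)
    (hβ0 : 0 < β) (hq0 : 0 < q)
    (hδ : δ = β * q) (hQb : 0 < Qb) (hμs : 0 < μs)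
    (hS : S = 1 + 1/δ + δ * Qb / μs)
    (hlamStar : lamStar = (S - Real.sqrt (S ^ 2 - 4 / δ)) / 2)
    (hPb : Pb = Qb / (1 - lamStar)) :
    1 - lamStar ≠ 0 ∧ 0 < Pb ∧
      Pb = Qb + Pb / δ - Pb ^ 2 / (μs + δ * Pb) := by
  have hδ0 : 0 < δ := hδ ▸ mul_pos hβ0 hq0
  have hp1 : (1 : ℝ) ^ 2 - S * 1 + 1 / δ < 0 := by
    have : 0 < δ * Qb / μs := by positivity
    rw [hS]; linarith
  rw [div_eq_mul_one_div 4 δ] at hlamStar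
  have hlam1 : lamStar < 1 := hlamStar ▸ smaller_root_lt_of_eval_neg hp1
  have hroot : lamStar ^ 2 - S * lamStar + 1 / δ = 0 := hlamStar ▸
    smaller_root_isRoot (sq_nonneg _ |>.trans (sq_sub_two_mul_lt_discrim_of_eval_neg hp1).le)
  have hgap : 0 < 1 - lamStar := sub_pos.2 hlam1
  subst hPb hS
  exact ⟨hgap.ne', div_pos hQb hgap, riccati_of_hamiltonian_root hδ0 hQb hμs hlam1 hroot⟩

/-- P_b := Q_b/(1 − λ*) is well defined (1 − λ* ≠ 0) and strictly
positive, and solves the scalar discrete algebraic Riccati equation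
P_b = Q_b + P_b/δ − P_b²/(μ_s + δ·P_b). -/
theorem riccati_solution_value_function_coefficient
    (β q Qb μs δ S lamStar Pb : ℝ)
    (hβ0 : 0 < β) (hβ1 : β < 1) (hq0 : 0 < q) (hq1 : q ≤ 1)
    (hδ : δ = β * q) (hQb : 0 < Qb) (hμs : 0 < μs)
    (hS : S = 1 + 1/δ + δ * Qb / μs)
    (hlamStar : lamStar = (S - Real.sqrt (S ^ 2 - 4 / δ)) / 2)
    (hPb : Pb = Qb / (1 - lamStar)) :
    1 - lamStar ≠ 0 ∧ 0 < Pb ∧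
      Pb = Qb + Pb / δ - Pb ^ 2 / (μs + δ * Pb) :=
  riccati_solution_value_function_coefficient_general β q Qb μs δ S lamStar Pb hβ0 hq0 hδ hQb hμs hS
    hlamStar hPb
end

section
/- Let β ∈ (0,1), q ∈ (0,1], δ := β·q, Q_b > 0, μ_s > 0, S := 1 + 1/δ + δ·Q_b/μ_s, λ* := (S − √(S² − 4/δ))/2 and P_b := Q_b/(1 − λ*). Then the closed-loop eigenvalue produced by the optimal Riccati feedback equals the stable Hamiltonian root: 1/δ − P_b/(μ_s + δ·P_b) = λ*. -/
/-!
Since `p(1) = -δ Q_b / μ_s < 0`, the stable root `λ*` of `p(λ) = λ² - S λ + 1/δ` lies below `1`, so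
`P_b = Q_b / (1 - λ*)` is positive. With `P = P_b`, the closed-loop identity
`1/δ - P / (μ_s + δ P) = λ*` is equivalent to `μ_s (1/δ - λ*) = δ λ* P`, i.e. to
`μ_s (1/δ - λ*)(1 - λ*) = δ Q_b λ*`, which is `p(λ*) = 0` once `S` is expanded.
-/

noncomputable def stableRoot (S c : ℝ) : ℝ := (S - √(S ^ 2 - 4 * c)) / 2

noncomputable def closedLoopEigenvalue (δ μ P : ℝ) : ℝ := 1 / δ - P / (μ + δ * P)

section
variable {S c : ℝ}

theorem sq_sub_four_mul_nonneg_of_one_add_le (hc : 0 ≤ c) (h : 1 + c ≤ S) :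
    0 ≤ S ^ 2 - 4 * c := by
  nlinarith [sq_nonneg (1 - c)]

theorem stableRoot_isRoot (h : 0 ≤ S ^ 2 - 4 * c) :
    stableRoot S c ^ 2 - S * stableRoot S c + c = 0 := by
  unfold stableRoot
  linear_combination Real.sq_sqrt h / 4

theorem stableRoot_lt_one (h : 1 + c < S) : stableRoot S c < 1 := by
  suffices S - 2 < √(S ^ 2 - 4 * c) by unfold stableRoot; linarith
  rcases lt_or_ge (S - 2) 0 with hneg | hnonneg
  · exact hneg.trans_le (Real.sqrt_nonneg _)
  · exact Real.lt_sqrt_of_sq_lt (by linarith)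

end

theorem closedLoopEigenvalue_eq_of_isRoot {δ Q μ l : ℝ} (hδ : 0 < δ) (hQ : 0 ≤ Q) (hμ : 0 < μ)
    (hl : l < 1) (hroot : l ^ 2 - (1 + 1 / δ + δ * Q / μ) * l + 1 / δ = 0) :
    closedLoopEigenvalue δ μ (Q / (1 - l)) = l := by
  set P := Q / (1 - l)
  have h1l : 0 < 1 - l := sub_pos.mpr hl
  have hden : 0 < μ + δ * P := by positivity
  have hkey : μ * (1 / δ - l) = δ * l * P := by
    rw [← mul_div_assoc, eq_div_iff h1l.ne']
    field_simp at hroot ⊢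
    linear_combination hroot
  have hδinv : δ * (1 / δ) = 1 := mul_one_div_cancel hδ.ne'
  unfold closedLoopEigenvalue
  rw [sub_eq_iff_eq_add', ← sub_eq_iff_eq_add, eq_div_iff hden.ne']
  linear_combination hkey + P * hδinv

theorem closed_loop_eigenvalue_eq_stable_root_general
    (β q Qb μs δ S lamStar Pb : ℝ)
    (hβ0 : 0 < β) (hq0 : 0 < q)
    (hδ : δ = β * q) (hQb : 0 < Qb) (hμs : 0 < μs)
    (hS : S = 1 + 1/δ + δ * Qb / μs)
    (hlamStar : lamStar = (S - Real.sqrt (S ^ 2 - 4 / δ)) / 2)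
    (hPb : Pb = Qb / (1 - lamStar)) :
    1 / δ - Pb / (μs + δ * Pb) = lamStar := by
  have hδ0 : 0 < δ := hδ ▸ mul_pos hβ0 hq0
  have hS_gt : 1 + 1 / δ < S := by
    have : 0 < δ * Qb / μs := by positivity
    linarith
  have hlamStar' : lamStar = stableRoot S (1 / δ) := by rw [hlamStar, stableRoot, mul_one_div]
  have hroot := stableRoot_isRoot (sq_sub_four_mul_nonneg_of_one_add_le (by positivity) hS_gt.le)
  rw [← hlamStar', hS] at hroot
  rw [hPb]
  exact closedLoopEigenvalue_eq_of_isRoot hδ0 hQb.le hμs (hlamStar' ▸ stableRoot_lt_one hS_gt) hroot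

/-- The closed-loop eigenvalue produced by the optimal Riccati
feedback equals the stable Hamiltonian root: 1/δ − P_b/(μ_s + δ·P_b) = λ*. -/
theorem closed_loop_eigenvalue_eq_stable_root
    (β q Qb μs δ S lamStar Pb : ℝ)
    (hβ0 : 0 < β) (hβ1 : β < 1) (hq0 : 0 < q) (hq1 : q ≤ 1)
    (hδ : δ = β * q) (hQb : 0 < Qb) (hμs : 0 < μs)
    (hS : S = 1 + 1/δ + δ * Qb / μs)
    (hlamStar : lamStar = (S - Real.sqrt (S ^ 2 - 4 / δ)) / 2)
    (hPb : Pb = Qb / (1 - lamStar)) :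
    1 / δ - Pb / (μs + δ * Pb) = lamStar :=
  closed_loop_eigenvalue_eq_stable_root_general β q Qb μs δ S lamStar Pb hβ0 hq0 hδ hQb hμs hS
    hlamStar hPb
end

section
/- Let β ∈ (0,1), q ∈ (0,1], δ := β·q, Q_b > 0, μ_s > 0, S := 1 + 1/δ + δ·Q_b/μ_s, λ* := (S − √(S² − 4/δ))/2 and G_b* := 1/δ − λ*. For any initial debt deviation b̂₀ ∈ ℝ, the closed-loop debt sequence defined by b̂_{t+1} = (1/δ − G_b*)·b̂_t with b̂_0 = b̂₀ equals b̂_t = (λ*)^t·b̂₀ and converges to 0 as t → ∞: the optimal (passive) fiscal rule locally stabilizes public-debt dynamics. -/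
/-- Under the optimal fiscal rule, the closed-loop debt sequence
b̂_{t+1} = (1/δ − G_b*)·b̂_t with b̂_0 = b̂₀ equals b̂_t = (λ*)^t·b̂₀ and converges
to 0: the optimal (passive) fiscal rule stabilizes public debt. -/
theorem optimal_fiscal_rule_stabilizes_debt
    (β q Qb μs δ S lamStar GbStar : ℝ)
    (hβ0 : 0 < β) (hβ1 : β < 1) (hq0 : 0 < q) (hq1 : q ≤ 1)
    (hδ : δ = β * q) (hQb : 0 < Qb) (hμs : 0 < μs)
    (hS : S = 1 + 1/δ + δ * Qb / μs)
    (hlamStar : lamStar = (S - Real.sqrt (S ^ 2 - 4 / δ)) / 2)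
    (hGb : GbStar = 1 / δ - lamStar)
    (b0 : ℝ) (b : ℕ → ℝ)
    (hb0 : b 0 = b0)
    (hrec : ∀ t : ℕ, b (t + 1) = (1 / δ - GbStar) * b t) :
    (∀ t : ℕ, b t = lamStar ^ t * b0) ∧
      Filter.Tendsto b Filter.atTop (nhds 0) := by
  have hδ0 : 0 < δ := by rw [hδ]; positivity
  have hδ1 : δ < 1 := by nlinarith [mul_le_of_le_one_right hβ0.le hq1]
  have hinv : 1 < 1/δ := one_lt_one_div hδ0 hδ1
  have hc : 0 < δ * Qb / μs := by positivity
  have h4 : (4:ℝ) / δ = 4 * (1/δ) := by ring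
  have hD : 0 ≤ S ^ 2 - 4 / δ := by rw [h4]; nlinarith [sq_nonneg (1/δ - 1)]
  set r := Real.sqrt (S ^ 2 - 4 / δ) with hr
  have hr0 : 0 ≤ r := Real.sqrt_nonneg _
  have hr2 : r ^ 2 = S ^ 2 - 4 / δ := Real.sq_sqrt hD
  have hS2 : 2 < S := by nlinarith
  have hlam1 : lamStar < 1 := by
    have hsq : (S - 2) ^ 2 < r ^ 2 := by rw [hr2, h4]; nlinarith
    have : S - 2 < r := lt_of_pow_lt_pow_left₀ 2 hr0 hsq
    rw [hlamStar]; linarith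
  have hlam0 : 0 < lamStar := by
    have hsq : r ^ 2 < S ^ 2 := by rw [hr2, h4]; nlinarith
    have : r < S := lt_of_pow_lt_pow_left₀ 2 (by linarith) hsq
    rw [hlamStar]; linarith
  have hcoef : 1 / δ - GbStar = lamStar := by rw [hGb]; ring
  have hform : ∀ t : ℕ, b t = lamStar ^ t * b0 := by
    intro t
    induction t with
    | zero => simpa using hb0
    | succ n ih => rw [hrec n, ih, hcoef]; ring
  refine ⟨hform, ?_⟩
  have habs : |lamStar| < 1 := abs_lt.mpr ⟨by linarith, hlam1⟩
  have h1 := (tendsto_pow_atTop_nhds_zero_of_abs_lt_one habs).mul_const b0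
  rw [zero_mul] at h1
  exact h1.congr fun t => (hform t).symm
end
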